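/- Let U be an open subset of a normed vector space S, τ > 0, and consider the set U^{[0,τ]} of all functions from [0,τ] to U, viewed as a subset of the space of bounded functions [0,τ] → S with sup norm. Then trimming commutes with forming function spaces: (U^{[0,τ]})_{-ρ} = (U_{-ρ})^{[0,τ]} for every ρ > 0, where the trimming on the left is with respect to the sup norm ‖u - v‖ = sup_{t∈[0,τ]} ‖u(t) - v(t)‖. -/

import Mathlib

/-! Moving a single value `u t` to a point `s` of the closed ρ-ball around it changes `u` by at
most `ρ` in the sup distance, so a ρ-ball around `u` inside the function space forces every
closed ρ-ball around a value `u t` into `U`; the converse is pointwise. -/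

/-- The ρ-trimming of a set in a normed space. -/
def trim {S : Type*} [SeminormedAddCommGroup S] (A : Set S) (ρ : ℝ) : Set S :=
  {s ∈ A | Metric.closedBall s ρ ⊆ A}

lemma norm_update_sub_le {ι S : Type*} [DecidableEq ι] [SeminormedAddCommGroup S]
    {u : ι → S} {t : ι} {s : S} {ρ : ℝ} (hs : ‖s - u t‖ ≤ ρ) (t' : ι) :
    ‖Function.update u t s t' - u t'‖ ≤ ρ := by
  rcases eq_or_ne t' t with rfl | hne
  · simpa using hs
  · simpa [Function.update_of_ne hne] using (norm_nonneg _).trans hs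

theorem forall_mem_trim_iff {ι S : Type*} [SeminormedAddCommGroup S] {U : Set S} {ρ : ℝ}
    {u : ι → S} :
    (∀ t, u t ∈ trim U ρ) ↔
      (∀ t, u t ∈ U) ∧ ∀ v : ι → S, (∀ t, ‖v t - u t‖ ≤ ρ) → ∀ t, v t ∈ U := by
  classical
  constructor
  · intro hu
    refine ⟨fun t => (hu t).1, fun v hv t => (hu t).2 ?_⟩
    simpa [dist_eq_norm] using hv t
  · rintro ⟨hu, hball⟩ t
    refine ⟨hu t, fun s hs => ?_⟩
    rw [Metric.mem_closedBall, dist_eq_norm] at hs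
    simpa using hball (Function.update u t s) (norm_update_sub_le hs) t

theorem trim_function_space_general {S : Type*} [NormedAddCommGroup S]
    (U : Set S) (τ : ℝ) (ρ : ℝ) :
    {u : Set.Icc (0 : ℝ) τ → S |
        (∀ t, u t ∈ U) ∧
          ∀ v : Set.Icc (0 : ℝ) τ → S, (∀ t, ‖v t - u t‖ ≤ ρ) → ∀ t, v t ∈ U} =
      {u : Set.Icc (0 : ℝ) τ → S | ∀ t, u t ∈ trim U ρ} := by
  ext u
  exact forall_mem_trim_iff.symm

/-- Trimming commutes with forming function spaces: for an open set `U` in a normed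
space and functions on the time interval `[0,τ]` with the sup-norm (uniform) distance,
the ρ-trimming of the set of `U`-valued functions equals the set of `U_{-ρ}`-valued
functions.  The closed ρ-ball around `u` in the sup distance is the set of functions
`v` with `‖v t - u t‖ ≤ ρ` for all `t`. -/
theorem trim_function_space {S : Type*} [NormedAddCommGroup S] [NormedSpace ℝ S]
    (U : Set S) (hU : IsOpen U) (τ : ℝ) (hτ : 0 < τ) (ρ : ℝ) (hρ : 0 < ρ) :
    {u : Set.Icc (0 : ℝ) τ → S |
        (∀ t, u t ∈ U) ∧
          ∀ v : Set.Icc (0 : ℝ) τ → S, (∀ t, ‖v t - u t‖ ≤ ρ) → ∀ t, v t ∈ U} =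
      {u : Set.Icc (0 : ℝ) τ → S | ∀ t, u t ∈ trim U ρ} :=
  trim_function_space_general U τ ρ
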